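/- Let u ∈ S(g) be a nonzero semi-invariant with weight λ ∈ g*. Then the Poisson centralizer C(u) = {f ∈ S(g) : {f,u} = 0} equals S(ker λ), the subalgebra of S(g) generated by ker λ, and the Poisson centralizer C_R(u) = {h ∈ R(g) : {h,u} = 0} equals R(ker λ), the subfield of R(g) generated by ker λ. -/

import Mathlib

open MvPolynomial

namespace LiePaper

/-! Basic notions for a finite-dimensional Lie algebra `g` over `k`:
the index, the symmetric algebra `S(g)` identified with `k[xᵢ]` via a basis, its Poisson
bracket, (semi-)invariants, the fraction field `R(g)`, the fundamental semi-invariant,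
algebraic hulls, and the quotient division ring of the enveloping algebra. -/

section Index
variable (k : Type*) [CommRing k] (g : Type*) [LieRing g] [LieAlgebra k g]

/-- The stabiliser `{x ∈ h | ∀ y ∈ h, ξ⁅x,y⁆ = 0}` of a functional `ξ`, relative to a
subspace `h` of the Lie algebra. -/
def relStab (h : Submodule k g) (ξ : Module.Dual k g) : Submodule k g where
  carrier := {x | x ∈ h ∧ ∀ y ∈ h, ξ ⁅x, y⁆ = 0}
  add_mem' := by
    rintro a b ⟨ha, ha'⟩ ⟨hb, hb'⟩
    exact ⟨h.add_mem ha hb, fun y hy => by rw [add_lie, map_add, ha' y hy, hb' y hy, add_zero]⟩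
  zero_mem' := ⟨h.zero_mem, fun y hy => by rw [zero_lie, map_zero]⟩
  smul_mem' := by
    rintro c a ⟨ha, ha'⟩
    exact ⟨h.smul_mem c ha, fun y hy => by rw [smul_lie, map_smul, ha' y hy, smul_zero]⟩

/-- The index of a Lie subalgebra (given as a subspace of `g`): the minimal dimension of
the stabiliser of a linear functional. -/
noncomputable def relIndex (h : Submodule k g) : ℕ :=
  ⨅ ξ : Module.Dual k g, Module.finrank k (relStab k g h ξ)

/-- The index `i(g)` of a Lie algebra: the minimal dimension of the stabiliser
`g(ξ) = {x | ∀ y, ξ⁅x,y⁆ = 0}` of a linear functional `ξ ∈ g*`. -/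
noncomputable def lieIndex : ℕ := relIndex k g ⊤

/-- A Lie algebra is unimodular if `tr (ad x) = 0` for all `x`. -/
def IsUnimodular : Prop := ∀ x : g, LinearMap.trace k g (LieAlgebra.ad k g x) = 0

/-- The linear functional `τ : x ↦ tr(ad x)`. -/
noncomputable def modularWeight : Module.Dual k g :=
  (LinearMap.trace k g) ∘ₗ (LieAlgebra.ad k g : g →ₗ[k] Module.End k g)

/-- `g` is indecomposable if it is not the direct product of two nonzero ideals. -/
def IsIndecomposable : Prop :=
  ¬ ∃ I J : LieIdeal k g, I ≠ ⊥ ∧ J ≠ ⊥ ∧ IsCompl (I : Submodule k g) (J : Submodule k g)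

/-- The derived algebra `[g,g]`, as a subspace. -/
def derivedSubspace : Submodule k g := Submodule.span k {z : g | ∃ x y : g, ⁅x, y⁆ = z}

/-- `g` is almost algebraic if `ad g` contains the semisimple and nilpotent components of
each of its elements. -/
def IsAlmostAlgebraic : Prop :=
  ∀ x : g, ∃ s n : g, LieAlgebra.ad k g x = LieAlgebra.ad k g s + LieAlgebra.ad k g n ∧
    (LieAlgebra.ad k g s).IsSemisimple ∧ IsNilpotent (LieAlgebra.ad k g n) ∧
    Commute (LieAlgebra.ad k g s : Module.End k g) (LieAlgebra.ad k g n)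

end Index

section Poly
variable {k : Type*} [CommRing k] {g : Type*} [LieRing g] [LieAlgebra k g]
variable {ι : Type*} [Fintype ι] [DecidableEq ι]

/-- The linear embedding of `g` into its symmetric algebra `S(g) = k[xᵢ]`,
determined by a basis. -/
noncomputable def toPoly (b : Module.Basis ι k g) (x : g) : MvPolynomial ι k :=
  ∑ i : ι, MvPolynomial.C (b.repr x i) * MvPolynomial.X i

/-- The Poisson bracket on `S(g) = k[x₁,…,xₙ]`:
`{f,h} = ∑ᵢ∑ⱼ [xᵢ,xⱼ] (∂f/∂xᵢ) (∂h/∂xⱼ)`. -/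
noncomputable def pbr (b : Module.Basis ι k g) (f h : MvPolynomial ι k) : MvPolynomial ι k :=
  ∑ i : ι, ∑ j : ι, toPoly b ⁅b i, b j⁆ * pderiv i f * pderiv j h

/-- The adjoint action of `x ∈ g` on `S(g)`, `ad x (f) = {x, f}`. -/
noncomputable def adP (b : Module.Basis ι k g) (x : g) (f : MvPolynomial ι k) : MvPolynomial ι k :=
  pbr b (toPoly b x) f

/-- The Poisson centre `Y(g) = S(g)^g` of the symmetric algebra: the set of invariants. -/
def Ycent (b : Module.Basis ι k g) : Set (MvPolynomial ι k) := {f | ∀ x : g, adP b x f = 0}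

/-- `f` is a semi-invariant of `S(g)` with weight `lam ∈ g*`. -/
def IsSemiInvariant (b : Module.Basis ι k g) (lam : Module.Dual k g) (f : MvPolynomial ι k) : Prop :=
  f ≠ 0 ∧ ∀ x : g, adP b x f = lam x • f

/-- `g` has no proper semi-invariants in `S(g)`. -/
def HasNoProperSemiInvariants (b : Module.Basis ι k g) : Prop :=
  ∀ lam f, IsSemiInvariant b lam f → lam = 0

/-- `Λ(g)`, the set of weights of semi-invariants of `S(g)`. -/
def weightSet (b : Module.Basis ι k g) : Set (Module.Dual k g) :=
  {lam | ∃ f, IsSemiInvariant b lam f}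

/-- The set of semi-invariants of `S(g)`. -/
def semiInvariants (b : Module.Basis ι k g) : Set (MvPolynomial ι k) :=
  {f | ∃ lam, IsSemiInvariant b lam f}

/-- The semi-centre `Sy(g)` of `S(g)`: the subalgebra generated by all semi-invariants. -/
noncomputable def semiCenter (b : Module.Basis ι k g) : Subalgebra k (MvPolynomial ι k) :=
  Algebra.adjoin k (semiInvariants b)

/-- The canonical truncation `g_Λ = ⋂ { ker λ | λ ∈ Λ(g) }`. -/
def truncation (b : Module.Basis ι k g) : Submodule k g :=
  ⨅ lam ∈ weightSet b, LinearMap.ker (lam : Module.Dual k g)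

/-- The copy of `S(h)` inside `S(g)`, for a subspace `h ⊆ g`: the subalgebra generated
by the image of `h`. -/
noncomputable def polySub (b : Module.Basis ι k g) (h : Submodule k g) :
    Subalgebra k (MvPolynomial ι k) :=
  Algebra.adjoin k (toPoly b '' (h : Set g))

/-- The Poisson centre (algebra of invariants) `Y(h)` of `S(h) ⊆ S(g)`, for a Lie
subalgebra `h ⊆ g`. -/
def relYcent (b : Module.Basis ι k g) (h : Submodule k g) : Set (MvPolynomial ι k) :=
  {f | f ∈ polySub b h ∧ ∀ x ∈ h, adP b x f = 0}

/-- The semi-invariants of the Lie subalgebra `h ⊆ g` inside `S(h) ⊆ S(g)`. -/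
def relSemiInvariants (b : Module.Basis ι k g) (h : Submodule k g) : Set (MvPolynomial ι k) :=
  {f | f ∈ polySub b h ∧ f ≠ 0 ∧
    ∃ lam : Module.Dual k g, ∀ x ∈ h, adP b x f = lam x • f}

/-- The relative version of: `h ⊆ g` has no proper semi-invariants (in `S(h)`). -/
def relHasNoProperSemiInvariants (b : Module.Basis ι k g) (h : Submodule k g) : Prop :=
  ∀ (lam : Module.Dual k g) (f : MvPolynomial ι k), f ∈ polySub b h → f ≠ 0 →
    (∀ x ∈ h, adP b x f = lam x • f) → ∀ x ∈ h, lam x = 0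

end Poly

section AlgebraGeneric
variable (R : Type*) {A : Type*} [CommRing R] [CommRing A] [Algebra R A]

/-- A subset of a commutative `R`-algebra "is a polynomial algebra over `R`" if it is the
subalgebra generated by a family of algebraically independent elements. -/
def IsPolynomialAlgebraOn (s : Set A) : Prop :=
  ∃ t : Set A, AlgebraicIndependent R ((↑) : t → A) ∧ (Algebra.adjoin R t : Set A) = s

/-- The transcendence degree over `R` of a subset of a commutative `R`-algebra. -/
noncomputable def trdegOn (s : Set A) : ℕ :=
  sSup {m | ∃ v : Fin m → A, (∀ i, v i ∈ s) ∧ AlgebraicIndependent R v}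

end AlgebraGeneric

section Frac
variable {k : Type*} [Field k] {g : Type*} [LieRing g] [LieAlgebra k g]
variable {ι : Type*} [Fintype ι] [DecidableEq ι]

/-- For a derivation-like operator `δ` of `S(g)` and `h` in the fraction field `R(g)`,
`ratAnn δ h` says that the canonical extension of `δ` to `R(g)` kills `h`:
`h` has a representation `h = f/u` with `δ f * u = f * δ u`. -/
def ratAnn (δ : MvPolynomial ι k → MvPolynomial ι k)
    (h : FractionRing (MvPolynomial ι k)) : Prop :=
  ∃ f u : MvPolynomial ι k, u ≠ 0 ∧
    h * algebraMap (MvPolynomial ι k) (FractionRing (MvPolynomial ι k)) u =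
      algebraMap (MvPolynomial ι k) (FractionRing (MvPolynomial ι k)) f ∧
    δ f * u = f * δ u

/-- The subfield of invariants `R(g)^g` of the rational Poisson algebra `R(g)`,
as a subset of the fraction field of `S(g)`. -/
def ratInv (b : Module.Basis ι k g) : Set (FractionRing (MvPolynomial ι k)) :=
  {h | ∀ x : g, ratAnn (adP b x) h}

/-- The invariants of a Lie subalgebra `h ⊆ g` acting on `R(g)`. -/
def ratInvRel (b : Module.Basis ι k g) (h : Submodule k g) :
    Set (FractionRing (MvPolynomial ι k)) :=
  {q | ∀ x ∈ h, ratAnn (adP b x) q}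

/-- The copy of the field `R(h) ⊆ R(g)` generated by `S(h)`, for a subspace `h ⊆ g`. -/
noncomputable def ratSub (b : Module.Basis ι k g) (h : Submodule k g) :
    Subfield (FractionRing (MvPolynomial ι k)) :=
  Subfield.closure
    (algebraMap (MvPolynomial ι k) (FractionRing (MvPolynomial ι k)) ''
      (polySub b h : Set (MvPolynomial ι k)))

/-- A subset of a field extension of `k` is a rational (purely transcendental) extension
of `k` if it is the subfield generated over `k` by a set of algebraically independent
elements. -/
def IsRationalSetOfField {F : Type*} [Field F] [Algebra k F] (A : Set F) : Prop :=
  ∃ s : Set F, AlgebraicIndependent k ((↑) : s → F) ∧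
    A = (Subfield.closure (Set.range (algebraMap k F) ∪ s) : Set F)

end Frac

section Pfaffian

/-- The Pfaffian of a `2m × 2m` matrix over a commutative algebra over a field `kk`
(of characteristic zero), via the averaged signed sum over permutations. -/
noncomputable def pfaffian (kk : Type*) [Field kk] {S : Type*} [CommRing S] [Algebra kk S]
    {m : ℕ} (A : Matrix (Fin (2 * m)) (Fin (2 * m)) S) : S :=
  algebraMap kk S ((2 ^ m * Nat.factorial m : kk)⁻¹) *
    ∑ σ : Equiv.Perm (Fin (2 * m)),
      (Equiv.Perm.sign σ : ℤ) •
        ∏ i : Fin m, A (σ ⟨2 * (i : ℕ), by omega⟩) (σ ⟨2 * (i : ℕ) + 1, by omega⟩)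

/-- `p` is a greatest common divisor of the set `T`. -/
def IsGCDOf {S : Type*} [CommRing S] (p : S) (T : Set S) : Prop :=
  (∀ q ∈ T, p ∣ q) ∧ ∀ p' : S, (∀ q ∈ T, p' ∣ q) → p' ∣ p

variable {k : Type*} [Field k] {g : Type*} [LieRing g] [LieAlgebra k g]
variable {ι : Type*} [Fintype ι] [DecidableEq ι]

/-- The Pfaffians of the principal `2m' × 2m'` minors of the structure matrix
`([cᵢ,cⱼ])` of the family `c` (inside the Poisson algebra `S(g)`, basis `b`). -/
noncomputable def principalPfaffians (b : Module.Basis ι k g) {d : ℕ} (c : Fin d → g) (m' : ℕ) :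
    Set (MvPolynomial ι k) :=
  {q | ∃ (s : Finset (Fin d)) (hs : s.card = 2 * m'),
      q = pfaffian k (fun i' j' : Fin (2 * m') =>
        toPoly b ⁅c ((s.orderIsoOfFin hs i') : Fin d), c ((s.orderIsoOfFin hs j') : Fin d)⁆)}

/-- `p` is a fundamental semi-invariant of the Lie subalgebra `h ⊆ g`: with
`t = dim h - i(h)`, `p` is a greatest common divisor of the Pfaffians of the principal
`t × t` minors of the structure matrix of `h`. -/
noncomputable def IsFundSemiInvRel (b : Module.Basis ι k g) (h : Submodule k g)
    (p : MvPolynomial ι k) : Prop :=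
  ∃ (d : ℕ) (c : Module.Basis (Fin d) k h) (m' : ℕ),
    d = relIndex k g h + 2 * m' ∧
    IsGCDOf p (principalPfaffians b (fun i => (c i : g)) m')

/-- `p` is a fundamental semi-invariant `p_g` of `g`. -/
noncomputable def IsFundSemiInv (b : Module.Basis ι k g) (p : MvPolynomial ι k) : Prop :=
  IsFundSemiInvRel b ⊤ p

end Pfaffian

section AlgGrp
variable {k : Type*} [Field k] {g : Type*} [LieRing g] [LieAlgebra k g]
variable {ι : Type*} [Fintype ι] [DecidableEq ι]

/-- The polynomial function `p` (on the space of `m × m` matrices) vanishes on the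
subgroup `G ⊆ GL(m,k)`. -/
def VanishesOn {m : Type*} [Fintype m] [DecidableEq m]
    (G : Subgroup (Matrix.GeneralLinearGroup m k)) (p : MvPolynomial (m × m) k) : Prop :=
  ∀ u ∈ G, MvPolynomial.eval (fun ij => (u : Matrix m m k) ij.1 ij.2) p = 0

/-- `G` is a Zariski closed subgroup of `GL(m,k)`. -/
def IsZariskiClosed {m : Type*} [Fintype m] [DecidableEq m]
    (G : Subgroup (Matrix.GeneralLinearGroup m k)) : Prop :=
  ∀ u : Matrix.GeneralLinearGroup m k,
    (∀ p : MvPolynomial (m × m) k, VanishesOn G p →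
      MvPolynomial.eval (fun ij => (u : Matrix m m k) ij.1 ij.2) p = 0) → u ∈ G

/-- The Lie algebra (tangent space at the identity, computed with dual numbers)
of a subgroup `G ⊆ GL(m,k)`, as a set of matrices. -/
noncomputable def lieAlgebraOf {m : Type*} [Fintype m] [DecidableEq m]
    (G : Subgroup (Matrix.GeneralLinearGroup m k)) : Set (Matrix m m k) :=
  {X | ∀ p : MvPolynomial (m × m) k, VanishesOn G p →
    MvPolynomial.aeval (fun ij : m × m =>
      algebraMap k (DualNumber k) ((1 : Matrix m m k) ij.1 ij.2) +
        DualNumber.eps * algebraMap k (DualNumber k) (X ij.1 ij.2)) p = 0}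

/-- The matrix of `ad x` with respect to the basis `b`. -/
noncomputable def adMat (b : Module.Basis ι k g) (x : g) : Matrix ι ι k :=
  LinearMap.toMatrix b b (LieAlgebra.ad k g x)

/-- The algebraic hull `H` of `ad g` inside `gl(g)` (in matrix form, w.r.t. the basis
`b`): the intersection of the Lie algebras of all Zariski closed subgroups of `GL(g)`
whose Lie algebra contains `ad g`; i.e. the smallest algebraic Lie subalgebra of
`Der(g)` containing `ad g`. -/
noncomputable def adHull (b : Module.Basis ι k g) : Set (Matrix ι ι k) :=
  ⋂ G ∈ {G : Subgroup (Matrix.GeneralLinearGroup ι k) |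
      IsZariskiClosed G ∧ Set.range (adMat b) ⊆ lieAlgebraOf G}, lieAlgebraOf G

/-- `g` is ad-algebraic: `ad g` coincides with its algebraic hull. -/
noncomputable def IsAdAlgebraic (b : Module.Basis ι k g) : Prop :=
  adHull b = Set.range (adMat b)

/-- The stabiliser `g[ξ] = {x ∈ g | ξ(Ex) = 0 ∀ E ∈ H}`, `H` the algebraic hull of
`ad g`. -/
noncomputable def altStab (b : Module.Basis ι k g) (ξ : Module.Dual k g) : Submodule k g where
  carrier := {x | ∀ E ∈ adHull b, ξ (Matrix.toLin b b E x) = 0}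
  add_mem' := fun {a c} ha hc E hE => by rw [map_add, map_add, ha E hE, hc E hE, add_zero]
  zero_mem' := fun E hE => by rw [map_zero, map_zero]
  smul_mem' := fun t a ha E hE => by rw [map_smul, map_smul, ha E hE, smul_zero]

/-- The alternative index `j(g)`: the minimal dimension of `g[ξ]`, `ξ ∈ g*`. -/
noncomputable def altIndex (b : Module.Basis ι k g) : ℕ :=
  ⨅ ξ : Module.Dual k g, Module.finrank k (altStab b ξ)

/-- `g` is an algebraic Lie algebra: `g` is (isomorphic to) the Lie algebra of a Zariski
closed subgroup of some `GL(m,k)`. -/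
noncomputable def IsAlgebraicLieAlgebra (k g : Type*) [Field k] [LieRing g]
    [LieAlgebra k g] : Prop :=
  ∃ (m : ℕ) (G : Subgroup (Matrix.GeneralLinearGroup (Fin m) k)), IsZariskiClosed G ∧
    ∃ φ : g →ₗ[k] Matrix (Fin m) (Fin m) k, Function.Injective φ ∧
      (∀ x y : g, φ ⁅x, y⁆ = φ x * φ y - φ y * φ x) ∧ Set.range φ = lieAlgebraOf G

end AlgGrp

section Env
variable (k : Type*) [Field k] (L : Type*) [LieRing L] [LieAlgebra k L]

/-- The adjoint action of `x ∈ L` on the universal enveloping algebra `U(L)`. -/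
noncomputable def adU (x : L) (u : UniversalEnvelopingAlgebra k L) :
    UniversalEnvelopingAlgebra k L :=
  UniversalEnvelopingAlgebra.ι k x * u - u * UniversalEnvelopingAlgebra.ι k x

variable {k L}

/-- `u` is a semi-invariant of `U(L)` with weight `lam ∈ L*`. -/
def IsSemiInvariantU (lam : Module.Dual k L) (u : UniversalEnvelopingAlgebra k L) : Prop :=
  u ≠ 0 ∧ ∀ x : L, adU k L x u = lam x • u

/-- The set of weights of semi-invariants of `U(L)`. -/
def weightSetU (k L : Type*) [Field k] [LieRing L] [LieAlgebra k L] :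
    Set (Module.Dual k L) :=
  {lam | ∃ u, IsSemiInvariantU lam u}

/-- The canonical truncation `L_Λ = ⋂ {ker lam | lam ∈ Λ(L)}`, via the semi-invariants
of the enveloping algebra. -/
def truncationU (k L : Type*) [Field k] [LieRing L] [LieAlgebra k L] : Submodule k L :=
  ⨅ lam ∈ weightSetU k L, LinearMap.ker (lam : Module.Dual k L)

/-- `D`, together with the embedding `φ : U(L) → D`, is the quotient division ring
`D(L)` of `U(L)`: `φ` is injective and every element of `D` has the form
`φ u * (φ v)⁻¹`. -/
def IsQuotientDivisionRing {D : Type*} [DivisionRing D] [Algebra k D]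
    (φ : UniversalEnvelopingAlgebra k L →ₐ[k] D) : Prop :=
  Function.Injective φ ∧
    ∀ d : D, ∃ u v : UniversalEnvelopingAlgebra k L, v ≠ 0 ∧ d * φ v = φ u

end Env

section Div
variable {k : Type*} [Field k] {D : Type*} [DivisionRing D] [Algebra k D]

/-- The division subring (as a set) generated by a subset of a division ring. -/
def divClosure (s : Set D) : Set D :=
  ⋂ T ∈ {T : Set D | s ⊆ T ∧ (1 : D) ∈ T ∧ (∀ a ∈ T, ∀ b ∈ T, a - b ∈ T) ∧
      (∀ a ∈ T, ∀ b ∈ T, a * b ∈ T) ∧ (∀ a ∈ T, a⁻¹ ∈ T)}, T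

/-- The centre of a subset of a ring. -/
def centerOf (s : Set D) : Set D := {z | z ∈ s ∧ ∀ w ∈ s, w * z = z * w}

/-- Evaluation of a (commutative) polynomial at a (possibly noncommuting) family of
elements of a `k`-algebra, using products taken in a fixed order. -/
noncomputable def ncEval {m : ℕ} (v : Fin m → D) (p : MvPolynomial (Fin m) k) : D :=
  ∑ d ∈ p.support, algebraMap k D (MvPolynomial.coeff d p) *
    (List.ofFn fun i : Fin m => v i ^ d i).prod

/-- Algebraic independence over `kk` of a finite family in a possibly noncommutative
`kk`-algebra (intended for pairwise commuting families). -/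
def NCAlgIndep {m : ℕ} (kk : Type*) [Field kk] {D : Type*} [DivisionRing D] [Algebra kk D]
    (v : Fin m → D) : Prop :=
  ∀ p : MvPolynomial (Fin m) kk, ncEval v p = 0 → p = 0

/-- The transcendence degree over `kk` of a subset of a division `kk`-algebra. -/
noncomputable def ncTrdegOn (kk : Type*) [Field kk] {D : Type*} [DivisionRing D]
    [Algebra kk D] (s : Set D) : ℕ :=
  sSup {m | ∃ v : Fin m → D, (∀ i, v i ∈ s) ∧ NCAlgIndep kk v}

/-- The centre `Z(D)` of the division ring `D` is rational (purely transcendental) over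
`kk`: it is generated, as a division subring over `kk`, by a finite family of
algebraically independent elements. -/
def IsRationalCenter (kk D : Type*) [Field kk] [DivisionRing D] [Algebra kk D] : Prop :=
  ∃ (m : ℕ) (v : Fin m → D), (∀ i, v i ∈ Set.center D) ∧ NCAlgIndep kk v ∧
    (Set.center D : Set D) = divClosure (Set.range (algebraMap kk D) ∪ Set.range v)

end Div


section Extra
variable {k : Type*} [Field k] {L : Type*} [LieRing L] [LieAlgebra k L]

/-- The copy of `U(L_Λ)` inside `U(L)`: the subalgebra generated by the image of the
canonical truncation. -/
noncomputable def envTrunc (k L : Type*) [Field k] [LieRing L] [LieAlgebra k L] :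
    Set (UniversalEnvelopingAlgebra k L) :=
  (Algebra.adjoin k ((UniversalEnvelopingAlgebra.ι k) '' (truncationU k L : Set L)) :
    Subalgebra k (UniversalEnvelopingAlgebra k L))

/-- The quotient division ring `D(L_Λ)` of `U(L_Λ)`, realised as the division subring of
`D(L)` generated by `U(L_Λ)`. -/
noncomputable def DTrunc {D : Type*} [DivisionRing D] [Algebra k D]
    (φ : UniversalEnvelopingAlgebra k L →ₐ[k] D) : Set D :=
  divClosure (φ '' envTrunc k L)

/-- A Lie subalgebra `P` of `s` is parabolic if it contains a Borel (i.e. maximal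
solvable) subalgebra of `s`. -/
def IsParabolic (k : Type*) {s : Type*} [CommRing k] [LieRing s] [LieAlgebra k s]
    (P : LieSubalgebra k s) : Prop :=
  ∃ B : LieSubalgebra k s, B ≤ P ∧ LieAlgebra.IsSolvable ↥B ∧
    ∀ B' : LieSubalgebra k s, LieAlgebra.IsSolvable ↥B' → B ≤ B' → B' = B

end Extra

end LiePaper

open LiePaper

/-! Since `u` has weight `λ`, the derivation `f ↦ {f, u}` of `S(g)` sends `x ∈ g` to `λ(x) u`,
so it equals `u • ∂_λ`, where `∂_λ` is the derivation of `S(g)` extending `λ : g → k`; both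
centralisers are therefore the kernels of `∂_λ`. For `λ ≠ 0`, a basis of `g` whose first
coordinate functional is `λ` (the other vectors spanning `ker λ`) turns `∂_λ` into `∂/∂x₀`, whose
kernel in characteristic zero is the polynomial algebra in the other variables, i.e. `S(ker λ)`.
In `R(g)`, write a quotient `f / v` killed by `∂_λ` in lowest terms: then `v ∣ ∂_λ v`, which
forces `∂_λ v = 0` by comparing degrees in `x₀`, and then `∂_λ f = 0`. -/

namespace MvPolynomial

theorem algHom_derivation_comm {σ R B : Type*} [CommSemiring R] [CommSemiring B] [Algebra R B]
    (φ : MvPolynomial σ R →ₐ[R] B) (D₁ : Derivation R (MvPolynomial σ R) (MvPolynomial σ R))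
    (D₂ : Derivation R B B) (h : ∀ i, φ (D₁ (X i)) = D₂ (φ (X i))) (p : MvPolynomial σ R) :
    φ (D₁ p) = D₂ (φ p) := by
  induction p using MvPolynomial.induction_on with
  | C a => simp [← algebraMap_eq]
  | add p q hp hq => simp [hp, hq]
  | mul_X p i hp => simp [hp, h, Derivation.leibniz]

section CommSemiring

variable {R : Type*} [CommSemiring R] {n : ℕ}

theorem finSuccEquiv_pderiv_zero (p : MvPolynomial (Fin (n + 1)) R) :
    finSuccEquiv R n (pderiv 0 p) = Polynomial.derivative (finSuccEquiv R n p) :=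
  algHom_derivation_comm (finSuccEquiv R n).toAlgHom _
    (Polynomial.derivative'.restrictScalars R)
    (fun i => by
      cases i using Fin.cases <;> simp [pderiv_X, finSuccEquiv_X_zero, finSuccEquiv_X_succ]) p

theorem finSuccEquiv_rename_succ (q : MvPolynomial (Fin n) R) :
    finSuccEquiv R n (rename Fin.succ q) = Polynomial.C q := by
  induction q using MvPolynomial.induction_on with
  | C a => simp [finSuccEquiv_apply]
  | add p q hp hq => simp [hp, hq]
  | mul_X p i hp => simp [hp, finSuccEquiv_X_succ]

end CommSemiring

variable {R : Type*} [CommRing R] [IsDomain R] {n : ℕ}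

theorem pderiv_zero_eq_zero_of_dvd {p : MvPolynomial (Fin (n + 1)) R}
    (h : p ∣ pderiv 0 p) : pderiv 0 p = 0 := by
  have hE := map_dvd (finSuccEquiv R n) h
  rw [finSuccEquiv_pderiv_zero, Polynomial.dvd_derivative_iff, ← finSuccEquiv_pderiv_zero,
    map_eq_zero_iff _ (finSuccEquiv R n).injective] at hE
  exact hE

theorem exists_rename_succ_eq_of_pderiv_zero_eq_zero [CharZero R]
    {p : MvPolynomial (Fin (n + 1)) R} (h : pderiv 0 p = 0) : ∃ q, rename Fin.succ q = p := by
  have hE : Polynomial.derivative (finSuccEquiv R n p) = 0 := by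
    rw [← finSuccEquiv_pderiv_zero, h, map_zero]
  refine ⟨(finSuccEquiv R n p).coeff 0, (finSuccEquiv R n).injective ?_⟩
  rw [finSuccEquiv_rename_succ, ← Polynomial.eq_C_of_derivative_eq_zero hE]

end MvPolynomial

theorem Derivation.exists_mem_ker_of_mul_eq_mul {R A : Type*} [CommRing R] [CommRing A]
    [IsDomain A] [UniqueFactorizationMonoid A] [Algebra R A] (D : Derivation R A A)
    (hD : ∀ v, v ∣ D v → D v = 0) {f v : A} (hv : v ≠ 0) (h : D f * v = f * D v) :
    ∃ f₀ v₀, v₀ ≠ 0 ∧ D f₀ = 0 ∧ D v₀ = 0 ∧ f * v₀ = f₀ * v := by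
  obtain ⟨v', f', c, hrel, rfl, rfl⟩ := UniqueFactorizationMonoid.exists_reduced_factors v hv f
  have hc : c ≠ 0 := left_ne_zero_of_mul hv
  have hv' : v' ≠ 0 := right_ne_zero_of_mul hv
  have h' : D f' * v' = f' * D v' := by
    refine mul_left_cancel₀ (mul_ne_zero hc hc) ?_
    simp only [Derivation.leibniz, smul_eq_mul] at h
    linear_combination h
  have hDv' : D v' = 0 := hD v' (hrel.dvd_of_dvd_mul_left ⟨D f', by rw [← h']; ring⟩)
  have hDf' : D f' = 0 := by
    simpa [hDv', hv'] using h'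
  exact ⟨f', v', hv', hDf', hDv', by ring⟩

theorem Module.Dual.exists_basis_coord_zero_eq {k V : Type*} [Field k] [AddCommGroup V]
    [Module k V] [FiniteDimensional k V] {lam : Module.Dual k V} (hlam : lam ≠ 0) :
    ∃ (n : ℕ) (c : Module.Basis (Fin (n + 1)) k V), c.coord 0 = lam := by
  obtain ⟨x, hx⟩ : ∃ x, lam x ≠ 0 := by
    by_contra! h
    exact hlam (LinearMap.ext h)
  set e := (lam x)⁻¹ • x
  have he : lam e = 1 := by simp [e, hx]
  let c := Module.Basis.mkFinCons e (Module.finBasis k (LinearMap.ker lam))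
    (fun a y hy hay => by simpa [he, LinearMap.mem_ker.mp hy] using congrArg lam hay)
    (fun z => ⟨-lam z, by simp [he]⟩)
  refine ⟨_, c, c.ext fun j => ?_⟩
  rw [Module.Basis.coord_apply, Module.Basis.repr_self]
  cases j using Fin.cases with
  | zero => simp [c, he]
  | succ j => simp [c, Fin.succ_ne_zero]

namespace LiePaper

section SymmetricAlgebra

variable {k : Type*} [Field k] {g : Type*} [LieRing g] [LieAlgebra k g]
variable {ι κ : Type*} [Fintype ι] [Fintype κ]

noncomputable def toPolyₗ (b : Module.Basis ι k g) : g →ₗ[k] MvPolynomial ι k where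
  toFun := toPoly b
  map_add' x y := by simp [toPoly, add_mul, Finset.sum_add_distrib]
  map_smul' r x := by simp [toPoly, Finset.mul_sum, smul_eq_C_mul, mul_assoc]

@[simp]
theorem toPolyₗ_apply (b : Module.Basis ι k g) (x : g) : toPolyₗ b x = toPoly b x := rfl

@[simp]
theorem toPoly_basis (b : Module.Basis ι k g) (i : ι) : toPoly b (b i) = X i := by
  classical
  simp [toPoly, Finsupp.single_apply, apply_ite C]

theorem aeval_toPoly (b : Module.Basis ι k g) (c : Module.Basis κ k g) (x : g) :
    aeval (fun j => toPoly b (c j)) (toPoly c x) = toPoly b x := by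
  have : (aeval fun j => toPoly b (c j)).toLinearMap ∘ₗ toPolyₗ c = toPolyₗ b :=
    c.ext fun j => by simp
  exact LinearMap.congr_fun this x

noncomputable def polyBasisChange (b : Module.Basis ι k g) (c : Module.Basis κ k g) :
    MvPolynomial κ k ≃ₐ[k] MvPolynomial ι k :=
  AlgEquiv.ofAlgHom (aeval fun j => toPoly b (c j)) (aeval fun i => toPoly c (b i))
    (algHom_ext fun i => by rw [AlgHom.comp_apply, aeval_X, aeval_toPoly, toPoly_basis]; rfl)
    (algHom_ext fun j => by rw [AlgHom.comp_apply, aeval_X, aeval_toPoly, toPoly_basis]; rfl)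

theorem polyBasisChange_apply (b : Module.Basis ι k g) (c : Module.Basis κ k g)
    (p : MvPolynomial κ k) : polyBasisChange b c p = aeval (fun j => toPoly b (c j)) p := rfl

@[simp]
theorem polyBasisChange_X (b : Module.Basis ι k g) (c : Module.Basis κ k g) (j : κ) :
    polyBasisChange b c (X j) = toPoly b (c j) :=
  aeval_X _ j

noncomputable def dualDerivation (b : Module.Basis ι k g) (lam : Module.Dual k g) :
    Derivation k (MvPolynomial ι k) (MvPolynomial ι k) :=
  mkDerivation k fun i => C (lam (b i))

theorem dualDerivation_toPoly (b : Module.Basis ι k g) (lam : Module.Dual k g) (x : g) :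
    dualDerivation b lam (toPoly b x) = C (lam x) := by
  have : (dualDerivation b lam).toLinearMap ∘ₗ toPolyₗ b = (Algebra.linearMap k _) ∘ₗ lam :=
    b.ext fun i => by simp [dualDerivation, mkDerivation_X]
  exact LinearMap.congr_fun this x

theorem dualDerivation_polyBasisChange [DecidableEq κ] (b : Module.Basis ι k g)
    {c : Module.Basis κ k g} {i₀ : κ} {lam : Module.Dual k g} (hc : c.coord i₀ = lam)
    (p : MvPolynomial κ k) :
    dualDerivation b lam (polyBasisChange b c p) = polyBasisChange b c (pderiv i₀ p) := by
  refine (algHom_derivation_comm (polyBasisChange b c).toAlgHom _ _ (fun j => ?_) p).symm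
  change polyBasisChange b c (pderiv i₀ (X j)) = dualDerivation b lam (polyBasisChange b c (X j))
  rw [polyBasisChange_X, dualDerivation_toPoly, ← hc, Module.Basis.coord_apply,
    Module.Basis.repr_self, pderiv_X]
  rcases eq_or_ne j i₀ with rfl | hj
  · simp
  · simp [hj, Ne.symm hj]

theorem polySub_top (b : Module.Basis ι k g) : polySub b ⊤ = ⊤ := by
  rw [eq_top_iff, ← adjoin_range_X, Algebra.adjoin_le_iff]
  rintro _ ⟨i, rfl⟩
  exact Algebra.subset_adjoin ⟨b i, trivial, toPoly_basis b i⟩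

theorem dualDerivation_eq_zero_of_mem (b : Module.Basis ι k g) (lam : Module.Dual k g)
    {f : MvPolynomial ι k} (hf : f ∈ polySub b (LinearMap.ker lam)) :
    dualDerivation b lam f = 0 := by
  refine Derivation.eqOn_adjoin (D2 := 0) ?_ hf
  rintro _ ⟨x, hx, rfl⟩
  simp [dualDerivation_toPoly, LinearMap.mem_ker.mp hx]

theorem dualDerivation_eq_zero_iff [CharZero k] (b : Module.Basis ι k g)
    (lam : Module.Dual k g) (f : MvPolynomial ι k) :
    dualDerivation b lam f = 0 ↔ f ∈ polySub b (LinearMap.ker lam) := by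
  refine ⟨fun hf => ?_, dualDerivation_eq_zero_of_mem b lam⟩
  rcases eq_or_ne lam 0 with rfl | hlam
  · simp [polySub_top]
  have := Module.Finite.of_basis b
  obtain ⟨n, c, hc⟩ := Module.Dual.exists_basis_coord_zero_eq hlam
  obtain ⟨q, hq⟩ : ∃ q, rename Fin.succ q = (polyBasisChange b c).symm f := by
    refine exists_rename_succ_eq_of_pderiv_zero_eq_zero ?_
    apply (polyBasisChange b c).injective
    rw [← dualDerivation_polyBasisChange b hc, AlgEquiv.apply_symm_apply, hf, map_zero]
  have hf' : f = aeval (fun j => toPoly b (c j.succ)) q := by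
    rw [← (polyBasisChange b c).apply_symm_apply f, ← hq, polyBasisChange_apply, aeval_rename]
    rfl
  rw [hf']
  refine Algebra.adjoin_mono ?_ ((Algebra.adjoin_range_eq_range_aeval k _).ge ⟨q, rfl⟩)
  rintro _ ⟨j, rfl⟩
  refine ⟨c j.succ, ?_, rfl⟩
  simp [← hc, Fin.succ_ne_zero]

theorem dualDerivation_eq_zero_of_dvd (b : Module.Basis ι k g) (lam : Module.Dual k g)
    {v : MvPolynomial ι k} (hv : v ∣ dualDerivation b lam v) : dualDerivation b lam v = 0 := by
  rcases eq_or_ne lam 0 with rfl | hlam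
  · exact dualDerivation_eq_zero_of_mem b 0 (by simp [polySub_top])
  have := Module.Finite.of_basis b
  obtain ⟨n, c, hc⟩ := Module.Dual.exists_basis_coord_zero_eq hlam
  obtain ⟨p, rfl⟩ := (polyBasisChange b c).surjective v
  rw [dualDerivation_polyBasisChange b hc] at hv ⊢
  rw [pderiv_zero_eq_zero_of_dvd ((map_dvd_iff (polyBasisChange b c)).mp hv), map_zero]

noncomputable def pbrDerivation (b : Module.Basis ι k g) (u : MvPolynomial ι k) :
    Derivation k (MvPolynomial ι k) (MvPolynomial ι k) :=
  ∑ i, ∑ j, (toPoly b ⁅b i, b j⁆ * pderiv j u) • pderiv i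

theorem pbrDerivation_apply (b : Module.Basis ι k g) (u f : MvPolynomial ι k) :
    pbrDerivation b u f = pbr b f u := by
  rw [pbrDerivation, ← Derivation.coeFnAddMonoidHom_apply]
  simp only [map_sum, Finset.sum_apply, Derivation.coeFnAddMonoidHom_apply,
    Derivation.smul_apply, smul_eq_mul, pbr]
  exact Finset.sum_congr rfl fun i _ => Finset.sum_congr rfl fun j _ => by ring

theorem pbr_eq_mul_dualDerivation (b : Module.Basis ι k g) {lam : Module.Dual k g}
    {u : MvPolynomial ι k} (hu : ∀ x, adP b x u = lam x • u) (f : MvPolynomial ι k) :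
    pbr b f u = u * dualDerivation b lam f := by
  have : pbrDerivation b u = u • dualDerivation b lam := derivation_ext fun i => by
    rw [pbrDerivation_apply, ← toPoly_basis b i, Derivation.smul_apply, dualDerivation_toPoly,
      smul_eq_mul, mul_comm, ← smul_eq_C_mul]
    exact hu (b i)
  rw [← pbrDerivation_apply, this, Derivation.smul_apply, smul_eq_mul]

end SymmetricAlgebra

section FractionField

variable {k : Type*} [Field k] {ι : Type*}

local notation "K" => FractionRing (MvPolynomial ι k)

theorem ratAnn_mul_left {δ : MvPolynomial ι k → MvPolynomial ι k} {u : MvPolynomial ι k}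
    (hu : u ≠ 0) (h : K) : ratAnn (fun f => u * δ f) h ↔ ratAnn δ h := by
  simp only [ratAnn, mul_assoc, mul_left_comm _ u, mul_right_inj' hu]

theorem ratAnn_iff_mem_closure (D : Derivation k (MvPolynomial ι k) (MvPolynomial ι k))
    (hD : ∀ v, v ∣ D v → D v = 0) {S : Subalgebra k (MvPolynomial ι k)}
    (hS : ∀ f, D f = 0 ↔ f ∈ S) (h : K) :
    ratAnn D h ↔ h ∈ Subfield.closure (algebraMap _ K '' (S : Set (MvPolynomial ι k))) := by
  constructor
  · rintro ⟨f, v, hv, hrep, hfv⟩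
    obtain ⟨f₀, v₀, hv₀, hf₀, hv₀', heq⟩ := D.exists_mem_ker_of_mul_eq_mul hD hv hfv
    have : h = algebraMap _ K f₀ / algebraMap _ K v₀ := by
      rw [eq_div_iff (IsFractionRing.to_map_ne_zero_of_mem_nonZeroDivisors
        (mem_nonZeroDivisors_of_ne_zero hv₀))]
      apply mul_right_cancel₀ (IsFractionRing.to_map_ne_zero_of_mem_nonZeroDivisors
        (mem_nonZeroDivisors_of_ne_zero hv))
      rw [mul_right_comm, hrep, ← map_mul, ← map_mul, heq]
    rw [this]
    exact div_mem (Subfield.subset_closure ⟨f₀, (hS f₀).mp hf₀, rfl⟩)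
      (Subfield.subset_closure ⟨v₀, (hS v₀).mp hv₀', rfl⟩)
  · intro hh
    obtain ⟨_, hy, _, hz, rfl⟩ := Subfield.mem_closure_iff.mp hh
    have hle : Subring.closure (algebraMap _ K '' (S : Set (MvPolynomial ι k))) ≤
        S.toSubring.map (algebraMap _ K) := Subring.closure_le.mpr fun _ hx => hx
    obtain ⟨f, hf, rfl⟩ := hle hy
    obtain ⟨v, hv, rfl⟩ := hle hz
    rcases eq_or_ne v 0 with rfl | hv0
    · exact ⟨0, 1, one_ne_zero, by simp, by simp⟩
    refine ⟨f, v, hv0, div_mul_cancel₀ _ ?_, ?_⟩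
    · exact IsFractionRing.to_map_ne_zero_of_mem_nonZeroDivisors
        (mem_nonZeroDivisors_of_ne_zero hv0)
    · rw [(hS f).mpr hf, (hS v).mpr hv, zero_mul, mul_zero]

end FractionField

end LiePaper

theorem statement_1_general {k : Type*} [Field k] [CharZero k]
    {g : Type*} [LieRing g] [LieAlgebra k g]
    {ι : Type*} [Fintype ι] (b : Module.Basis ι k g)
    (u : MvPolynomial ι k) (lam : Module.Dual k g) (hu : IsSemiInvariant b lam u) :
    {f : MvPolynomial ι k | pbr b f u = 0} =
      (polySub b (LinearMap.ker lam) : Set (MvPolynomial ι k)) ∧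
    {h : FractionRing (MvPolynomial ι k) | ratAnn (fun f => pbr b f u) h} =
      (ratSub b (LinearMap.ker lam) : Set (FractionRing (MvPolynomial ι k))) := by
  obtain ⟨hu0, hux⟩ := hu
  have hpbr : (fun f => pbr b f u) = fun f => u * dualDerivation b lam f :=
    funext (pbr_eq_mul_dualDerivation b hux)
  refine ⟨Set.ext fun f => ?_, Set.ext fun h => ?_⟩
  · change pbr b f u = 0 ↔ f ∈ polySub b (LinearMap.ker lam)
    rw [pbr_eq_mul_dualDerivation b hux, mul_eq_zero, or_iff_right hu0,
      dualDerivation_eq_zero_iff]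
  · change ratAnn (fun f => pbr b f u) h ↔ h ∈ ratSub b (LinearMap.ker lam)
    rw [hpbr, ratAnn_mul_left hu0]
    exact ratAnn_iff_mem_closure _ (fun v => dualDerivation_eq_zero_of_dvd b lam)
      (dualDerivation_eq_zero_iff b lam) h

/-- Lemma 3.  If `u ∈ S(g)` is a nonzero semi-invariant with weight
`λ ∈ g*`, then the Poisson centraliser of `u` in `S(g)` is `S(ker λ)` and the Poisson
centraliser of `u` in `R(g)` is `R(ker λ)`. -/
theorem statement_1 {k : Type*} [Field k] [IsAlgClosed k] [CharZero k]
    {g : Type*} [LieRing g] [LieAlgebra k g]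
    {ι : Type*} [Fintype ι] [DecidableEq ι] (b : Module.Basis ι k g)
    (u : MvPolynomial ι k) (lam : Module.Dual k g) (hu : IsSemiInvariant b lam u) :
    {f : MvPolynomial ι k | pbr b f u = 0} =
      (polySub b (LinearMap.ker lam) : Set (MvPolynomial ι k)) ∧
    {h : FractionRing (MvPolynomial ι k) | ratAnn (fun f => pbr b f u) h} =
      (ratSub b (LinearMap.ker lam) : Set (FractionRing (MvPolynomial ι k))) :=
  statement_1_general b u lam hu
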